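/- Gromak's Bäcklund transformation: let D ⊆ ℂ be open with 0 ∉ D, and let u : D → ℂ be analytic, nonvanishing, and satisfy the generic Painlevé-III equation with parameters (Θ₀, Θ∞) on D. Define û(x) := (x·u'(x) + 2x·u(x)² + 2x − 2(1 − Θ∞)·u(x) − u(x)) / (u(x)·(x·u'(x) + 2x·u(x)² + 2x + 2Θ₀·u(x) + u(x))). If both expressions x·u'(x) + 2x·u(x)² + 2x − 2(1 − Θ∞)·u(x) − u(x) and x·u'(x) + 2x·u(x)² + 2x + 2Θ₀·u(x) + u(x) are nonvanishing on D, then û satisfies the generic Painlevé-III equation with parameters (Θ₀ + 1, Θ∞ − 1) on D. -/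

import Mathlib

open Complex Filter

set_option maxHeartbeats 10000000
set_option maxRecDepth 4000

/-- The generic Painlevé-III equation with parameters `(Θ0, Θinf)` holds for the
function `u` at the point `x`. -/
def PIIIat (Θ0 Θinf : ℂ) (u : ℂ → ℂ) (x : ℂ) : Prop :=
  deriv (deriv u) x =
    (deriv u x) ^ 2 / u x - deriv u x / x
      + (4 * Θ0 * (u x) ^ 2 + 4 * (1 - Θinf)) / x
      + 4 * (u x) ^ 3 - 4 / u x

private lemma hasDerivAt_div_sq {Q M : ℂ → ℂ} {x q m : ℂ} (hQ : HasDerivAt Q q x)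
    (hM : HasDerivAt M m x) (h0 : M x ≠ 0) :
    HasDerivAt (fun z => Q z / (M z) ^ 2) ((q * M x - 2 * Q x * m) / (M x) ^ 3) x := by
  refine (hQ.fun_div (hM.fun_pow 2) (pow_ne_zero 2 h0)).congr_deriv ?_
  field_simp
  ring

private lemma helperA (Q N M x A B : ℂ) (hx : x ≠ 0) (hN : N ≠ 0) (hM : M ≠ 0) :
    (Q / M ^ 2) ^ 2 / (N / M) - Q / M ^ 2 / x + (4 * A * (N / M) ^ 2 + B) / x
      + 4 * (N / M) ^ 3 - 4 / (N / M)
    = (Q ^ 2 * x - Q * N * M + 4 * A * N ^ 3 * M + B * N * M ^ 3 + 4 * N ^ 4 * x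
        - 4 * M ^ 4 * x) / (x * N * M ^ 3) := by
  have hM2 : (M:ℂ) ^ 2 ≠ 0 := pow_ne_zero 2 hM
  have hM3 : (M:ℂ) ^ 3 ≠ 0 := pow_ne_zero 3 hM
  have e1 : (Q / M ^ 2) ^ 2 / (N / M) = Q ^ 2 / (M ^ 3 * N) := by
    field_simp
  have e2 : Q / M ^ 2 / x = Q / (M ^ 2 * x) := by rw [div_div]
  have e3 : (4 * A * (N / M) ^ 2 + B) / x = (4 * A * N ^ 2 + B * M ^ 2) / (M ^ 2 * x) := by
    field_simp
  have e4 : 4 * (N / M) ^ 3 = 4 * N ^ 3 / M ^ 3 := by rw [div_pow, mul_div_assoc]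
  have e5 : (4:ℂ) / (N / M) = 4 * M / N := by rw [div_div_eq_mul_div]
  rw [e1, e2, e3, e4, e5,
    div_sub_div _ _ (mul_ne_zero hM3 hN) (mul_ne_zero hM2 hx),
    div_add_div _ _ (mul_ne_zero (mul_ne_zero hM3 hN) (mul_ne_zero hM2 hx)) (mul_ne_zero hM2 hx),
    div_add_div _ _ (mul_ne_zero (mul_ne_zero (mul_ne_zero hM3 hN) (mul_ne_zero hM2 hx)) (mul_ne_zero hM2 hx)) hM3,
    div_sub_div _ _ (mul_ne_zero (mul_ne_zero (mul_ne_zero (mul_ne_zero hM3 hN) (mul_ne_zero hM2 hx)) (mul_ne_zero hM2 hx)) hM3) hN,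
    div_eq_div_iff
      (mul_ne_zero (mul_ne_zero (mul_ne_zero (mul_ne_zero (mul_ne_zero hM3 hN) (mul_ne_zero hM2 hx)) (mul_ne_zero hM2 hx)) hM3) hN)
      (mul_ne_zero (mul_ne_zero hx hN) hM3)]
  ring

private lemma helperB (A B M X : ℂ) (hM : M ≠ 0) (hX : X ≠ 0) (h : A * X = B) :
    A / M ^ 3 = B / (X * M ^ 3) := by
  rw [← h, mul_comm A X, mul_div_mul_left _ _ hX]

/-- Gromak's Bäcklund transformation: if `u` solves PIII with parameters
`(Θ0, Θinf)` on `D` and the two indicated expressions are nonvanishing on `D`,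
then `û` solves PIII with parameters `(Θ0 + 1, Θinf - 1)` on `D`. -/
theorem painleveIII_backlund_transformation (D : Set ℂ) (hD : IsOpen D)
    (h0 : (0 : ℂ) ∉ D) (Θ0 Θinf : ℂ) (u : ℂ → ℂ)
    (hana : ∀ x ∈ D, AnalyticAt ℂ u x)
    (hnz : ∀ x ∈ D, u x ≠ 0)
    (hsol : ∀ x ∈ D, PIIIat Θ0 Θinf u x)
    (hnum : ∀ x ∈ D,
      x * deriv u x + 2 * x * (u x) ^ 2 + 2 * x - 2 * (1 - Θinf) * u x - u x ≠ 0)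
    (hden : ∀ x ∈ D,
      x * deriv u x + 2 * x * (u x) ^ 2 + 2 * x + 2 * Θ0 * u x + u x ≠ 0) :
    ∀ x ∈ D, PIIIat (Θ0 + 1) (Θinf - 1)
      (fun y =>
        (y * deriv u y + 2 * y * (u y) ^ 2 + 2 * y - 2 * (1 - Θinf) * u y - u y) /
          (u y * (y * deriv u y + 2 * y * (u y) ^ 2 + 2 * y + 2 * Θ0 * u y + u y))) x := by
  intro x hx
  set v : ℂ → ℂ := fun y =>
      (y * deriv u y + 2 * y * (u y) ^ 2 + 2 * y - 2 * (1 - Θinf) * u y - u y) /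
        (u y * (y * deriv u y + 2 * y * (u y) ^ 2 + 2 * y + 2 * Θ0 * u y + u y)) with hvdef
  set V : ℂ → ℂ := fun z =>
      ((u z * (4 * z * u z * deriv u z + (2 + 4 * Θ0) * (u z) ^ 2 + 2 + 4 * (1 - Θinf)
            + 4 * z * (u z) ^ 3)
          + (z * (deriv u z) ^ 2 - 4 * z)
          - (2 * (1 - Θinf) + 1) * (u z * deriv u z))
        * (z * deriv u z + 2 * z * (u z) ^ 2 + 2 * z + 2 * Θ0 * u z + u z)
       - (z * deriv u z + 2 * z * (u z) ^ 2 + 2 * z - 2 * (1 - Θinf) * u z - u z)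
          * deriv u z
          * (z * deriv u z + 2 * z * (u z) ^ 2 + 2 * z + 2 * Θ0 * u z + u z)
       - (z * deriv u z + 2 * z * (u z) ^ 2 + 2 * z - 2 * (1 - Θinf) * u z - u z)
          * (u z * (4 * z * u z * deriv u z + (2 + 4 * Θ0) * (u z) ^ 2 + 2 + 4 * (1 - Θinf)
                + 4 * z * (u z) ^ 3)
              + (z * (deriv u z) ^ 2 - 4 * z)
              + (2 * Θ0 + 1) * (u z * deriv u z)))
      / (u z * (z * deriv u z + 2 * z * (u z) ^ 2 + 2 * z + 2 * Θ0 * u z + u z)) ^ 2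
    with hVdef
  have hAD : AnalyticOnNhd ℂ (deriv u) D :=
    AnalyticOnNhd.deriv (fun y hy => hana y hy)
  -- derivative facts at an arbitrary point of D
  have hbc : ∀ y ∈ D, HasDerivAt u (deriv u y) y ∧
      HasDerivAt (deriv u)
        ((deriv u y) ^ 2 / u y - deriv u y / y
          + (4 * Θ0 * (u y) ^ 2 + 4 * (1 - Θinf)) / y
          + 4 * (u y) ^ 3 - 4 / u y) y := by
    intro y hy
    refine ⟨((hana y hy).differentiableAt).hasDerivAt, ?_⟩
    have hc : HasDerivAt (deriv u) (deriv (deriv u) y) y :=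
      ((hAD y hy).differentiableAt).hasDerivAt
    have hs := hsol y hy
    unfold PIIIat at hs
    rwa [hs] at hc
  have hder : ∀ y ∈ D, HasDerivAt v (V y) y := by
    intro y hy
    have hy0 : y ≠ 0 := fun h => h0 (h ▸ hy)
    have ha : u y ≠ 0 := hnz y hy
    have hdd := hden y hy
    obtain ⟨hb, hc⟩ := hbc y hy
    have hN : HasDerivAt (fun z =>
        z * deriv u z + 2 * z * (u z) ^ 2 + 2 * z - 2 * (1 - Θinf) * u z - u z) _ y :=
      (((((hasDerivAt_id' y).mul hc).add
          (((hasDerivAt_id' y).const_mul 2).mul (hb.fun_pow 2))).add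
          ((hasDerivAt_id' y).const_mul 2)).sub
          (hb.const_mul (2 * (1 - Θinf)))).sub hb
    have hDn : HasDerivAt (fun z =>
        z * deriv u z + 2 * z * (u z) ^ 2 + 2 * z + 2 * Θ0 * u z + u z) _ y :=
      (((((hasDerivAt_id' y).mul hc).add
          (((hasDerivAt_id' y).const_mul 2).mul (hb.fun_pow 2))).add
          ((hasDerivAt_id' y).const_mul 2)).add
          (hb.const_mul (2 * Θ0))).add hb
    have hM : HasDerivAt (fun z =>
        u z * (z * deriv u z + 2 * z * (u z) ^ 2 + 2 * z + 2 * Θ0 * u z + u z)) _ y :=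
      hb.mul hDn
    have hM0 : u y * (y * deriv u y + 2 * y * (u y) ^ 2 + 2 * y + 2 * Θ0 * u y + u y) ≠ 0 :=
      mul_ne_zero ha hdd
    have hvd := hN.fun_div hM hM0
    rw [hvdef]
    refine hvd.congr_deriv ?_
    rw [hVdef]
    rw [div_eq_div_iff (pow_ne_zero 2 hM0) (pow_ne_zero 2 hM0)]
    field_simp [ha, hy0]
    ring
  -- at the point x
  have hx0 : x ≠ 0 := fun h => h0 (h ▸ hx)
  have ha : u x ≠ 0 := hnz x hx
  have hdd := hden x hx
  have hnn := hnum x hx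
  obtain ⟨hb, hc⟩ := hbc x hx
  have hev : deriv v =ᶠ[nhds x] V :=
    Filter.eventuallyEq_of_mem (hD.mem_nhds hx) (fun y hy => (hder y hy).deriv)
  -- build HasDerivAt V _ x
  have hK : HasDerivAt (fun z =>
      4 * z * u z * deriv u z + (2 + 4 * Θ0) * (u z) ^ 2 + 2 + 4 * (1 - Θinf)
        + 4 * z * (u z) ^ 3) _ x :=
    (((((((hasDerivAt_id' x).const_mul 4).fun_mul hb).fun_mul hc).fun_add
        ((hb.fun_pow 2).const_mul (2 + 4 * Θ0))).fun_add (hasDerivAt_const x 2)).fun_add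
        (hasDerivAt_const x (4 * (1 - Θinf)))).fun_add
        (((hasDerivAt_id' x).const_mul 4).fun_mul (hb.fun_pow 3))
  have hR : HasDerivAt (fun z => z * (deriv u z) ^ 2 - 4 * z) _ x :=
    ((hasDerivAt_id' x).fun_mul (hc.fun_pow 2)).fun_sub ((hasDerivAt_id' x).const_mul 4)
  have hN : HasDerivAt (fun z =>
      z * deriv u z + 2 * z * (u z) ^ 2 + 2 * z - 2 * (1 - Θinf) * u z - u z) _ x :=
    (((((hasDerivAt_id' x).fun_mul hc).fun_add
        (((hasDerivAt_id' x).const_mul 2).fun_mul (hb.fun_pow 2))).fun_add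
        ((hasDerivAt_id' x).const_mul 2)).fun_sub
        (hb.const_mul (2 * (1 - Θinf)))).fun_sub hb
  have hDn : HasDerivAt (fun z =>
      z * deriv u z + 2 * z * (u z) ^ 2 + 2 * z + 2 * Θ0 * u z + u z) _ x :=
    (((((hasDerivAt_id' x).fun_mul hc).fun_add
        (((hasDerivAt_id' x).const_mul 2).fun_mul (hb.fun_pow 2))).fun_add
        ((hasDerivAt_id' x).const_mul 2)).fun_add
        (hb.const_mul (2 * Θ0))).fun_add hb
  have huNP : HasDerivAt (fun z =>
      u z * (4 * z * u z * deriv u z + (2 + 4 * Θ0) * (u z) ^ 2 + 2 + 4 * (1 - Θinf)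
          + 4 * z * (u z) ^ 3)
        + (z * (deriv u z) ^ 2 - 4 * z)
        - (2 * (1 - Θinf) + 1) * (u z * deriv u z)) _ x :=
    ((hb.fun_mul hK).fun_add hR).fun_sub ((hb.fun_mul hc).const_mul (2 * (1 - Θinf) + 1))
  have huDP : HasDerivAt (fun z =>
      u z * (4 * z * u z * deriv u z + (2 + 4 * Θ0) * (u z) ^ 2 + 2 + 4 * (1 - Θinf)
          + 4 * z * (u z) ^ 3)
        + (z * (deriv u z) ^ 2 - 4 * z)
        + (2 * Θ0 + 1) * (u z * deriv u z)) _ x :=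
    ((hb.fun_mul hK).fun_add hR).fun_add ((hb.fun_mul hc).const_mul (2 * Θ0 + 1))
  have hQ : HasDerivAt (fun z =>
      (u z * (4 * z * u z * deriv u z + (2 + 4 * Θ0) * (u z) ^ 2 + 2 + 4 * (1 - Θinf)
            + 4 * z * (u z) ^ 3)
          + (z * (deriv u z) ^ 2 - 4 * z)
          - (2 * (1 - Θinf) + 1) * (u z * deriv u z))
        * (z * deriv u z + 2 * z * (u z) ^ 2 + 2 * z + 2 * Θ0 * u z + u z)
       - (z * deriv u z + 2 * z * (u z) ^ 2 + 2 * z - 2 * (1 - Θinf) * u z - u z)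
          * deriv u z
          * (z * deriv u z + 2 * z * (u z) ^ 2 + 2 * z + 2 * Θ0 * u z + u z)
       - (z * deriv u z + 2 * z * (u z) ^ 2 + 2 * z - 2 * (1 - Θinf) * u z - u z)
          * (u z * (4 * z * u z * deriv u z + (2 + 4 * Θ0) * (u z) ^ 2 + 2 + 4 * (1 - Θinf)
                + 4 * z * (u z) ^ 3)
              + (z * (deriv u z) ^ 2 - 4 * z)
              + (2 * Θ0 + 1) * (u z * deriv u z))) _ x :=
    ((huNP.fun_mul hDn).fun_sub ((hN.fun_mul hc).fun_mul hDn)).fun_sub (hN.fun_mul huDP)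
  have hM : HasDerivAt (fun z =>
      u z * (z * deriv u z + 2 * z * (u z) ^ 2 + 2 * z + 2 * Θ0 * u z + u z)) _ x :=
    hb.fun_mul hDn
  have hM0 : u x * (x * deriv u x + 2 * x * (u x) ^ 2 + 2 * x + 2 * Θ0 * u x + u x) ≠ 0 :=
    mul_ne_zero ha hdd
  have hM20 : (u x * (x * deriv u x + 2 * x * (u x) ^ 2 + 2 * x + 2 * Θ0 * u x + u x)) ^ 2 ≠ 0 :=
    pow_ne_zero 2 hM0
  have hdV := (hasDerivAt_div_sq hQ hM hM0 : HasDerivAt V _ x).deriv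
  have hvx : v x = (x * deriv u x + 2 * x * (u x) ^ 2 + 2 * x - 2 * (1 - Θinf) * u x - u x) / (u x * (x * deriv u x + 2 * x * (u x) ^ 2 + 2 * x + 2 * Θ0 * u x + u x)) := by rw [hvdef]
  have hVx : V x = ((u x * (4 * x * u x * deriv u x + (2 + 4 * Θ0) * (u x) ^ 2 + 2 + 4 * (1 - Θinf) + 4 * x * (u x) ^ 3)
          + (x * (deriv u x) ^ 2 - 4 * x)
          - (2 * (1 - Θinf) + 1) * (u x * deriv u x))
        * (x * deriv u x + 2 * x * (u x) ^ 2 + 2 * x + 2 * Θ0 * u x + u x)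
       - (x * deriv u x + 2 * x * (u x) ^ 2 + 2 * x - 2 * (1 - Θinf) * u x - u x)
          * deriv u x
          * (x * deriv u x + 2 * x * (u x) ^ 2 + 2 * x + 2 * Θ0 * u x + u x)
       - (x * deriv u x + 2 * x * (u x) ^ 2 + 2 * x - 2 * (1 - Θinf) * u x - u x)
          * (u x * (4 * x * u x * deriv u x + (2 + 4 * Θ0) * (u x) ^ 2 + 2 + 4 * (1 - Θinf) + 4 * x * (u x) ^ 3)
              + (x * (deriv u x) ^ 2 - 4 * x)
              + (2 * Θ0 + 1) * (u x * deriv u x)))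
      / (u x * (x * deriv u x + 2 * x * (u x) ^ 2 + 2 * x + 2 * Θ0 * u x + u x)) ^ 2 := by rw [hVdef]
  unfold PIIIat
  rw [hev.deriv_eq, hdV, (hder x hx).deriv, hvx, hVx]
  rw [helperA _ _ _ _ (Θ0 + 1) (4 * (1 - (Θinf - 1))) hx0 hnn hM0]
  refine helperB _ _ _ _ hM0 (mul_ne_zero hx0 hnn) ?_
  beta_reduce
  field_simp [ha, hx0]
  ring
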